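/- arXiv:1906.03286 — 2 statements merged into one kernel-verified Lean document; each statement's English description precedes it below -/
import Mathlib

section
/- Let F be a probability distribution on nonnegative reals with finite expectation, and let v_1, ..., v_n be i.i.d. samples from F. Then E[max(v_1,...,v_n)] ≤ E[v | v ≥ F^{-1}(1 - 1/n)], i.e., the expected maximum of n i.i.d. samples is at most the conditional expectation of a single sample above its (1 - 1/n)-quantile. -/
/-!
For every threshold `q`, `max_i v_i ≤ q + ∑_i (v_i - q)⁺` pointwise, so the expected maximum is
at most `q + n E[(v - q)⁺]`. When `P(v ≥ q) = 1/n`, `E[(v - q)⁺]` equals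
`∫_{v ≥ q} v - q/n`, and the two occurrences of `q` cancel.
-/

open MeasureTheory

lemma iSup_le_add_sum_max_sub {ι : Type*} [Fintype ι] [Nonempty ι] (x : ι → ℝ) (q : ℝ) :
    ⨆ i, x i ≤ q + ∑ i, max (x i - q) 0 := by
  refine ciSup_le fun i => ?_
  calc x i ≤ q + max (x i - q) 0 := by linarith [le_max_left (x i - q) 0]
    _ ≤ q + ∑ j, max (x j - q) 0 := by
      gcongr
      exact Finset.single_le_sum (f := fun j => max (x j - q) 0)
        (fun j _ => le_max_right _ _) (Finset.mem_univ i)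

lemma MeasureTheory.Integrable.max_sub_const_zero {μ : Measure ℝ} [IsFiniteMeasure μ]
    (hint : Integrable id μ) (q : ℝ) : Integrable (fun t => max (t - q) 0) μ :=
  (hint.sub (integrable_const q)).pos_part

lemma integral_max_sub_const_zero {μ : Measure ℝ} [IsFiniteMeasure μ] (hint : Integrable id μ)
    (q : ℝ) : ∫ t, max (t - q) 0 ∂μ = ∫ t in Set.Ici q, t ∂μ - q * μ.real (Set.Ici q) := by
  have hind : (fun t => max (t - q) 0) = (Set.Ici q).indicator (fun t => t - q) := by
    funext t
    by_cases h : q ≤ t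
    · simp [h]
    · simp [h, (not_le.mp h).le]
  rw [hind, integral_indicator measurableSet_Ici,
    integral_sub (f := fun t => t) hint.integrableOn (integrableOn_const (measure_lt_top μ _).ne),
    setIntegral_const, smul_eq_mul, mul_comm]

section Pi

variable {ι : Type*} [Fintype ι] {μ : ι → Measure ℝ}

lemma integrable_max_sub_const_zero_eval [∀ i, IsFiniteMeasure (μ i)]
    (hint : ∀ i, Integrable id (μ i)) (q : ℝ) (i : ι) :
    Integrable (fun x : ι → ℝ => max (x i - q) 0) (Measure.pi μ) :=
  integrable_comp_eval (X := fun _ => ℝ) (f := fun t => max (t - q) 0)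
    ((hint i).max_sub_const_zero q)

lemma integrable_add_sum_max_sub_const_zero [∀ i, IsFiniteMeasure (μ i)]
    (hint : ∀ i, Integrable id (μ i)) (q : ℝ) :
    Integrable (fun x : ι → ℝ => q + ∑ i, max (x i - q) 0) (Measure.pi μ) :=
  (integrable_const q).add <|
    integrable_finsetSum _ fun i _ => integrable_max_sub_const_zero_eval hint q i

lemma integrable_iSup_pi [Nonempty ι] [∀ i, IsFiniteMeasure (μ i)]
    (hint : ∀ i, Integrable id (μ i)) :
    Integrable (fun x : ι → ℝ => ⨆ i, x i) (Measure.pi μ) := by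
  obtain ⟨j⟩ := ‹Nonempty ι›
  exact integrable_of_le_of_le (Measurable.iSup measurable_pi_apply).aestronglyMeasurable
    (ae_of_all _ fun x => le_ciSup (Finite.bddAbove_range x) j)
    (ae_of_all _ fun x => iSup_le_add_sum_max_sub x 0)
    (integrable_eval (hint j)) (integrable_add_sum_max_sub_const_zero hint 0)

lemma integral_iSup_pi_le [Nonempty ι] [∀ i, IsProbabilityMeasure (μ i)]
    (hint : ∀ i, Integrable id (μ i)) (q : ℝ) :
    ∫ x, ⨆ i, x i ∂(Measure.pi μ) ≤ q + ∑ i, ∫ t, max (t - q) 0 ∂(μ i) := by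
  have hpos := integrable_max_sub_const_zero_eval hint q
  calc ∫ x, ⨆ i, x i ∂(Measure.pi μ)
      ≤ ∫ x, (q + ∑ i, max (x i - q) 0) ∂(Measure.pi μ) :=
        integral_mono (integrable_iSup_pi hint) (integrable_add_sum_max_sub_const_zero hint q)
          fun x => iSup_le_add_sum_max_sub x q
    _ = q + ∑ i, ∫ t, max (t - q) 0 ∂(μ i) := by
      rw [integral_add (integrable_const q) (integrable_finsetSum _ fun i _ => hpos i),
        integral_finsetSum _ fun i _ => hpos i, integral_const, probReal_univ, one_smul]
      congr 1
      exact Finset.sum_congr rfl fun i _ =>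
        integral_comp_eval (X := fun _ => ℝ) (f := fun t => max (t - q) 0)
          ((hint i).max_sub_const_zero q).aestronglyMeasurable

end Pi

theorem stmt0_general (n : ℕ) (hn : 1 ≤ n) (μ : Measure ℝ) [IsProbabilityMeasure μ]
    (hint : Integrable id μ)
    (q : ℝ) (hq : μ {x | q ≤ x} = ENNReal.ofReal (1 / n)) :
    ∫ x : Fin n → ℝ, (⨆ i, x i) ∂(Measure.pi fun _ : Fin n => μ)
      ≤ (n : ℝ) * ∫ x in {x : ℝ | q ≤ x}, x ∂μ := by
  have : Nonempty (Fin n) := ⟨⟨0, hn⟩⟩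
  have hn0 : (n : ℝ) ≠ 0 := by positivity
  have hμq : μ.real (Set.Ici q) = 1 / n :=
    (congrArg ENNReal.toReal hq).trans (ENNReal.toReal_ofReal (by positivity))
  calc ∫ x : Fin n → ℝ, (⨆ i, x i) ∂(Measure.pi fun _ : Fin n => μ)
      ≤ q + ∑ _i : Fin n, ∫ t, max (t - q) 0 ∂μ := integral_iSup_pi_le (fun _ => hint) q
    _ = q + n * (∫ t in Set.Ici q, t ∂μ - q * (1 / n)) := by
      rw [Finset.sum_const, Finset.card_univ, Fintype.card_fin, nsmul_eq_mul,
        integral_max_sub_const_zero hint, hμq]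
    _ = (n : ℝ) * ∫ t in Set.Ici q, t ∂μ := by field_simp; ring

/-- The expected maximum of `n` i.i.d. samples from a nonnegative distribution `μ`
is at most the conditional expectation of a single sample above its `(1-1/n)`-quantile
(an event assumed to have probability exactly `1/n`). -/
theorem stmt0 (n : ℕ) (hn : 1 ≤ n) (μ : Measure ℝ) [IsProbabilityMeasure μ]
    (hnonneg : ∀ᵐ x ∂μ, 0 ≤ x) (hint : Integrable id μ)
    (q : ℝ) (hq : μ {x | q ≤ x} = ENNReal.ofReal (1 / n))
    (hmax : Integrable (fun x : Fin n → ℝ => ⨆ i, x i) (Measure.pi fun _ : Fin n => μ)) :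
    ∫ x : Fin n → ℝ, (⨆ i, x i) ∂(Measure.pi fun _ : Fin n => μ)
      ≤ (n : ℝ) * ∫ x in {x : ℝ | q ≤ x}, x ∂μ :=
  stmt0_general n hn μ hint q hq
end

section
/- Let v be a nonnegative random variable with continuous distribution F, let p, q ≥ 0 with q ≤ p, let n ≥ m ≥ 1, and set r = p - (ε/n)·q for ε ∈ (0,1). Suppose P(v ≥ q) = 1/m and E[v | v ≥ q] = q†. Then E[(v - r)·1{v ≥ r}] ≤ (1+ε)·q†/m, where additionally q ≤ q† and P(v ≥ p) ≤ P(v ≥ q). -/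
open MeasureTheory

/-- Split at `p`: above it `x - r = (x - p) + (p - r)` with `p ≥ 0`; below it `x - r < p - r`,
while the tail term is nonnegative because `q ≥ 0`. -/
lemma indicator_sub_le_indicator_add {α : Type*} (X : α → ℝ) {p q r : ℝ}
    (hq : 0 ≤ q) (hqp : q ≤ p) (hrp : r ≤ p) (ω : α) :
    {ω | r ≤ X ω}.indicator (fun ω => X ω - r) ω ≤ {ω | q ≤ X ω}.indicator X ω + (p - r) := by
  simp only [Set.indicator_apply, Set.mem_ofPred_eq]
  split_ifs <;> linarith

lemma setIntegral_sub_le_setIntegral_add {Ω : Type*} [MeasurableSpace Ω] (μ : Measure Ω)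
    [IsProbabilityMeasure μ] {X : Ω → ℝ} (hX : Integrable X μ) {p q r : ℝ}
    (hq : 0 ≤ q) (hqp : q ≤ p) (hrp : r ≤ p) :
    ∫ ω in {ω | r ≤ X ω}, (X ω - r) ∂μ ≤ ∫ ω in {ω | q ≤ X ω}, X ω ∂μ + (p - r) := by
  have hmeas (c : ℝ) : NullMeasurableSet {ω | c ≤ X ω} μ :=
    nullMeasurableSet_le aemeasurable_const hX.aemeasurable
  have htail : Integrable ({ω | q ≤ X ω}.indicator X) μ := hX.indicator₀ (hmeas q)
  have hexcess : Integrable ({ω | r ≤ X ω}.indicator (fun ω => X ω - r)) μ :=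
    (hX.sub (integrable_const r)).indicator₀ (hmeas r)
  calc ∫ ω in {ω | r ≤ X ω}, (X ω - r) ∂μ
      = ∫ ω, {ω | r ≤ X ω}.indicator (fun ω => X ω - r) ω ∂μ := (integral_indicator₀ (hmeas r)).symm
    _ ≤ ∫ ω, ({ω | q ≤ X ω}.indicator X ω + (p - r)) ∂μ :=
        integral_mono hexcess (htail.add (integrable_const _))
          (indicator_sub_le_indicator_add X hq hqp hrp)
    _ = ∫ ω in {ω | q ≤ X ω}, X ω ∂μ + (p - r) := by
        rw [integral_add htail (integrable_const _), integral_indicator₀ (hmeas q), integral_const,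
          probReal_univ, one_smul]

theorem stmt7_general {Ω : Type*} [MeasurableSpace Ω] (μ : Measure Ω) [IsProbabilityMeasure μ]
    (X : Ω → ℝ) (hint : Integrable X μ)
    (p q qd : ℝ) (hq0 : 0 ≤ q) (hqp : q ≤ p)
    (n m : ℕ) (hm : 1 ≤ m) (hmn : m ≤ n)
    (ε : ℝ) (hε : ε ∈ Set.Ioo (0 : ℝ) 1)
    (r : ℝ) (hr : r = p - ε / n * q)
    (hqd : qd = m * ∫ ω in {ω | q ≤ X ω}, X ω ∂μ)
    (hqqd : q ≤ qd) :
    ∫ ω in {ω | r ≤ X ω}, (X ω - r) ∂μ ≤ (1 + ε) * qd / m := by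
  have hε0 : 0 ≤ ε := hε.1.le
  have hm0 : (0 : ℝ) < m := by exact_mod_cast hm
  have hmn' : (m : ℝ) ≤ n := by exact_mod_cast hmn
  have hgap : p - r = ε / n * q := by rw [hr]; ring
  have hrp : r ≤ p := by rw [hr, sub_le_self_iff]; positivity
  have htail : ∫ ω in {ω | q ≤ X ω}, X ω ∂μ = qd / m := by rw [hqd]; field_simp
  calc ∫ ω in {ω | r ≤ X ω}, (X ω - r) ∂μ
      ≤ qd / m + ε / n * q := by
        rw [← htail, ← hgap]; exact setIntegral_sub_le_setIntegral_add μ hint hq0 hqp hrp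
    _ ≤ qd / m + ε / m * qd := by gcongr
    _ = (1 + ε) * qd / m := by ring

/-- Bad-state per-round utility upper bound: with `r = p - (ε/n)·q`, `q ≤ p`,
`P(X ≥ q) = 1/m`, `q† = E[X | X ≥ q]` (so `q† = m·E[X·1{X ≥ q}]`) and `q ≤ q†`,
we have `E[(X - r)·1{X ≥ r}] ≤ (1+ε)·q†/m`. -/
theorem stmt7 {Ω : Type*} [MeasurableSpace Ω] (μ : Measure Ω) [IsProbabilityMeasure μ]
    (X : Ω → ℝ) (hX : ∀ᵐ ω ∂μ, 0 ≤ X ω) (hint : Integrable X μ)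
    (p q qd : ℝ) (hq0 : 0 ≤ q) (hqp : q ≤ p)
    (n m : ℕ) (hm : 1 ≤ m) (hmn : m ≤ n)
    (ε : ℝ) (hε : ε ∈ Set.Ioo (0 : ℝ) 1)
    (r : ℝ) (hr : r = p - ε / n * q)
    (hquant : μ {ω | q ≤ X ω} = ENNReal.ofReal (1 / m))
    (hqd : qd = m * ∫ ω in {ω | q ≤ X ω}, X ω ∂μ)
    (hqqd : q ≤ qd) :
    ∫ ω in {ω | r ≤ X ω}, (X ω - r) ∂μ ≤ (1 + ε) * qd / m :=
  stmt7_general μ X hint p q qd hq0 hqp n m hm hmn ε hε r hr hqd hqqd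
end
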